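/- Let Λ be a nonempty finite subset of Z^d and let ν be a probability measure on Ω satisfying the Gaussian concentration bound GCB(D) for some D > 0. Let B_Λ ⊂ S^Λ be a set of patterns with ν{ω : ω_Λ ∈ B_Λ} = 1/2, and for ε > 0 let B_{Λ,ε} = {σ ∈ S^Λ : d̄_Λ(σ, B_Λ) ≤ ε|Λ|}, where d̄_Λ(σ,τ) = Σ_{x∈Λ} 1{σ_x ≠ τ_x} is the Hamming distance and d̄_Λ(σ, B_Λ) = min over τ ∈ B_Λ of d̄_Λ(σ,τ). Then, whenever ε > 2√(D·ln 2)/√|Λ|: ν{ω : ω_Λ ∈ B_{Λ,ε}} ≥ 1 − exp(−(|Λ|/(4D))·(ε − 2√(D·ln 2)/√|Λ|)²). -/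

import Mathlib

/-!
The Hamming distance `F` to `B` has oscillation at most `1` at the sites of `Λ` and `0` elsewhere,
so `GCB(D)` makes `F - 𝔼F` sub-Gaussian with variance proxy `2D|Λ|`. Since `F = 0` on a set of
measure `1/2`, the Chernoff bound for the lower tail forces `𝔼F ≤ 2√(D|Λ| log 2)`, and the
Chernoff bound for the upper tail at level `ε|Λ| - 𝔼F` is the claimed estimate.
-/

open MeasureTheory Filter

namespace Paper

/-- Sites of the lattice `ℤ^d`. -/
abbrev Site (d : ℕ) := Fin d → ℤ

/-- Configuration space `Ω = S^{ℤ^d}`. -/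
abbrev Config (S : Type) (d : ℕ) := Site d → S

variable {S : Type} {d : ℕ}

/-- Shift action: `(T_x ω)_y = ω_{y-x}`. -/
def shift (x : Site d) (ω : Config S d) : Config S d := fun y => ω (y - x)

/-- Oscillation `δ_x(F)` of `F` at site `x`. -/
noncomputable def osc (F : Config S d → ℝ) (x : Site d) : ℝ :=
  sSup {r | ∃ ω ω' : Config S d, (∀ y, y ≠ x → ω y = ω' y) ∧ r = |F ω - F ω'|}

/-- `‖δ(F)‖₁`. -/
noncomputable def oscNorm1 (F : Config S d → ℝ) : ℝ := ∑' x : Site d, osc F x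

/-- `‖δ(F)‖₂²`. -/
noncomputable def oscNorm2sq (F : Config S d → ℝ) : ℝ := ∑' x : Site d, osc F x ^ 2

/-- `‖δ(F)‖₂`. -/
noncomputable def oscNorm2 (F : Config S d → ℝ) : ℝ := Real.sqrt (oscNorm2sq F)

/-- `F ∈ Δ₁(Ω)`: continuous with summable oscillations. -/
def MemDelta1 [TopologicalSpace S] (F : Config S d → ℝ) : Prop :=
  Continuous F ∧ Summable (fun x : Site d => osc F x)

/-- `F ∈ Δ₂(Ω)`: continuous with square-summable oscillations. -/
def MemDelta2 [TopologicalSpace S] (F : Config S d → ℝ) : Prop :=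
  Continuous F ∧ Summable (fun x : Site d => osc F x ^ 2)

/-- Gaussian concentration bound `GCB(D)`. -/
def GCB [TopologicalSpace S] [MeasurableSpace S] (ν : Measure (Config S d)) (D : ℝ) : Prop :=
  ∀ F : Config S d → ℝ, MemDelta2 F →
    ∫ ω, Real.exp (F ω - ∫ ω', F ω' ∂ν) ∂ν ≤ Real.exp (D * oscNorm2sq F)

/-- Moment concentration bound `MCB(2p, C)` of order `2p` with constant `C`. -/
def MCB [TopologicalSpace S] [MeasurableSpace S] (ν : Measure (Config S d)) (p : ℕ) (C : ℝ) :
    Prop :=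
  ∀ F : Config S d → ℝ, MemDelta2 F →
    ∫ ω, (F ω - ∫ ω', F ω' ∂ν) ^ (2 * p) ∂ν ≤ C * (oscNorm2sq F) ^ p

/-- A local function: depends only on finitely many coordinates. -/
def IsLocal (F : Config S d → ℝ) : Prop :=
  ∃ Λ : Finset (Site d), ∀ ω ω' : Config S d, (∀ x ∈ Λ, ω x = ω' x) → F ω = F ω'

/-- The cube `C_n = {x : ‖x‖_∞ ≤ n}`. -/
noncomputable def cube (d n : ℕ) : Finset (Site d) :=
  Fintype.piFinset (fun _ : Fin d => Finset.Icc (-(n : ℤ)) (n : ℤ))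

/-- Sup norm `‖f‖_∞`. -/
noncomputable def supNorm (f : Config S d → ℝ) : ℝ := sSup {r | ∃ ω, r = |f ω|}

/-- Restriction `ω_Λ` of a configuration to `Λ`. -/
def restrictTo (Λ : Finset (Site d)) (ω : Config S d) : {x // x ∈ Λ} → S := fun x => ω x.1

/-- Hamming distance from a pattern `σ` to a set `B` of patterns. -/
noncomputable def hamDistToSet [DecidableEq S] {Λ : Finset (Site d)}
    (σ : {x // x ∈ Λ} → S) (B : Set ({x // x ∈ Λ} → S)) : ℕ :=
  sInf {n : ℕ | ∃ τ ∈ B, hammingDist σ τ = n}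

end Paper

open ProbabilityTheory Real
open scoped NNReal

namespace ProbabilityTheory.HasSubgaussianMGF

variable {Ω : Type*} [MeasurableSpace Ω] {μ : Measure Ω} {X : Ω → ℝ} {c : ℝ≥0}

lemma le_sqrt_of_le_measureReal (h : HasSubgaussianMGF X c μ) (hc : 0 < c)
    {u p : ℝ} (hp : 0 < p) (hpu : p ≤ μ.real {ω | u ≤ X ω}) : u ≤ √(2 * c * log p⁻¹) := by
  rcases lt_or_ge u 0 with hu | hu
  · exact hu.le.trans (sqrt_nonneg _)
  have hlog : log p ≤ -u ^ 2 / (2 * c) :=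
    (log_le_iff_le_exp hp).mpr (hpu.trans (h.measure_ge_le hu))
  rw [le_div_iff₀ (by positivity)] at hlog
  refine le_sqrt_of_sq_le ?_
  rw [log_inv]
  linarith

lemma integral_le_sqrt (h : HasSubgaussianMGF (fun ω => X ω - μ[X]) c μ)
    (hc : 0 < c) {p : ℝ} (hp : 0 < p) (hpX : p ≤ μ.real {ω | X ω ≤ 0}) :
    μ[X] ≤ √(2 * c * log p⁻¹) :=
  h.neg.le_sqrt_of_le_measureReal hc hp (by simpa using hpX)

end ProbabilityTheory.HasSubgaussianMGF

lemma MeasureTheory.one_sub_ofReal_le_measure_of_compl_subset {Ω : Type*} [MeasurableSpace Ω]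
    {μ : Measure Ω} [IsProbabilityMeasure μ] {s t : Set Ω} {e : ℝ} (hst : sᶜ ⊆ t)
    (ht : μ.real t ≤ e) : 1 - ENNReal.ofReal e ≤ μ s := by
  have hcompl : μ sᶜ ≤ ENNReal.ofReal e :=
    (measure_mono hst).trans (by rw [← ofReal_measureReal]; exact ENNReal.ofReal_le_ofReal ht)
  rw [tsub_le_iff_right]
  calc 1 = μ (s ∪ sᶜ) := by rw [Set.union_compl_self, measure_univ]
    _ ≤ μ s + μ sᶜ := measure_union_le _ _
    _ ≤ μ s + ENNReal.ofReal e := by gcongr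

namespace Paper

section Oscillation

variable {S : Type} {d : ℕ} {F : Config S d → ℝ} {x : Site d}

lemma osc_nonneg (F : Config S d → ℝ) (x : Site d) : 0 ≤ osc F x :=
  Real.sSup_nonneg (by rintro r ⟨ω, ω', -, rfl⟩; exact abs_nonneg _)

lemma osc_le {b : ℝ} (hb : 0 ≤ b)
    (h : ∀ ω ω' : Config S d, (∀ y, y ≠ x → ω y = ω' y) → |F ω - F ω'| ≤ b) :
    osc F x ≤ b :=
  Real.sSup_le (by rintro r ⟨ω, ω', hωω', rfl⟩; exact h ω ω' hωω') hb

lemma osc_const_mul (t : ℝ) (F : Config S d → ℝ) (x : Site d) :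
    osc (fun ω => t * F ω) x = |t| * osc F x := by
  rw [osc, osc, ← smul_eq_mul, ← Real.sSup_smul_of_nonneg (abs_nonneg t)]
  congr 1
  ext r
  simp only [Set.mem_ofPred_eq, Set.mem_smul_set, smul_eq_mul]
  constructor
  · rintro ⟨ω, ω', hωω', rfl⟩
    exact ⟨_, ⟨ω, ω', hωω', rfl⟩, by rw [← abs_mul, mul_sub]⟩
  · rintro ⟨_, ⟨ω, ω', hωω', rfl⟩, rfl⟩
    exact ⟨ω, ω', hωω', by rw [← abs_mul, mul_sub]⟩

lemma oscNorm2sq_const_mul (t : ℝ) (F : Config S d → ℝ) :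
    oscNorm2sq (fun ω => t * F ω) = t ^ 2 * oscNorm2sq F := by
  simp only [oscNorm2sq, osc_const_mul, mul_pow, sq_abs, tsum_mul_left]

lemma MemDelta2.const_mul [TopologicalSpace S] (hF : MemDelta2 F) (t : ℝ) :
    MemDelta2 (fun ω => t * F ω) := by
  refine ⟨continuous_const.mul hF.1, ?_⟩
  simp only [osc_const_mul, mul_pow, sq_abs]
  exact hF.2.mul_left _

variable {Λ : Finset (Site d)}

lemma summable_osc_sq_of_osc_eq_zero (h : ∀ x ∉ Λ, osc F x = 0) :
    Summable fun x => osc F x ^ 2 :=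
  summable_of_ne_finset_zero fun x hx => by rw [h x hx, sq, mul_zero]

lemma oscNorm2sq_le_card (h₀ : ∀ x ∉ Λ, osc F x = 0) (h₁ : ∀ x, osc F x ≤ 1) :
    oscNorm2sq F ≤ Λ.card := by
  rw [oscNorm2sq, tsum_eq_sum fun x hx => by rw [h₀ x hx, sq, mul_zero]]
  calc ∑ x ∈ Λ, osc F x ^ 2 ≤ ∑ _x ∈ Λ, (1 : ℝ) :=
        Finset.sum_le_sum fun x _ => pow_le_one₀ (osc_nonneg F x) (h₁ x)
    _ = Λ.card := by simp

end Oscillation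

section HammingDistance

variable {S : Type} {d : ℕ} {Λ : Finset (Site d)} {x : Site d} {ω ω' : Config S d}

lemma restrictTo_eq_of_notMem (hx : x ∉ Λ) (h : ∀ y, y ≠ x → ω y = ω' y) :
    restrictTo Λ ω = restrictTo Λ ω' :=
  funext fun i => h i.1 fun hi => hx (hi ▸ i.2)

variable [DecidableEq S]

lemma hamDistToSet_eq_zero_of_mem {σ : {x // x ∈ Λ} → S} {B : Set ({x // x ∈ Λ} → S)}
    (hσ : σ ∈ B) : hamDistToSet σ B = 0 :=
  Nat.sInf_eq_zero.mpr (Or.inl ⟨σ, hσ, hammingDist_self σ⟩)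

lemma hamDistToSet_le_add (σ σ' : {x // x ∈ Λ} → S) (B : Set ({x // x ∈ Λ} → S)) :
    hamDistToSet σ B ≤ hamDistToSet σ' B + hammingDist σ σ' := by
  rcases B.eq_empty_or_nonempty with rfl | ⟨τ₀, hτ₀⟩
  · simp [hamDistToSet]
  obtain ⟨τ, hτ, hτσ'⟩ := Nat.sInf_mem (s := {n | ∃ τ ∈ B, hammingDist σ' τ = n})
    ⟨_, τ₀, hτ₀, rfl⟩
  calc hamDistToSet σ B ≤ hammingDist σ τ := Nat.sInf_le ⟨τ, hτ, rfl⟩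
    _ ≤ hammingDist σ σ' + hammingDist σ' τ := hammingDist_triangle σ σ' τ
    _ = hamDistToSet σ' B + hammingDist σ σ' := by rw [add_comm, hτσ']; rfl

lemma abs_sub_hamDistToSet_le (σ σ' : {x // x ∈ Λ} → S) (B : Set ({x // x ∈ Λ} → S)) :
    |(hamDistToSet σ B : ℝ) - hamDistToSet σ' B| ≤ hammingDist σ σ' := by
  have h₁ := hamDistToSet_le_add σ σ' B
  have h₂ := hamDistToSet_le_add σ' σ B
  rw [hammingDist_comm] at h₂
  rw [abs_sub_le_iff, sub_le_iff_le_add', sub_le_iff_le_add']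
  exact ⟨by exact_mod_cast h₁, by exact_mod_cast h₂⟩

lemma hammingDist_restrictTo_le_one (h : ∀ y, y ≠ x → ω y = ω' y) :
    hammingDist (restrictTo Λ ω) (restrictTo Λ ω') ≤ 1 := by
  refine Finset.card_le_one.mpr fun i hi j hj => Subtype.ext ?_
  simp only [Finset.mem_filter, Finset.mem_univ, true_and] at hi hj
  exact (not_imp_comm.mp (h i.1) hi).trans (not_imp_comm.mp (h j.1) hj).symm

variable (B : Set ({x // x ∈ Λ} → S))

lemma osc_hamDistToSet_le_one (x : Site d) :
    osc (fun ω => (hamDistToSet (restrictTo Λ ω) B : ℝ)) x ≤ 1 :=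
  osc_le zero_le_one fun _ _ h => (abs_sub_hamDistToSet_le _ _ B).trans
    (by exact_mod_cast hammingDist_restrictTo_le_one h)

lemma osc_hamDistToSet_eq_zero (hx : x ∉ Λ) :
    osc (fun ω => (hamDistToSet (restrictTo Λ ω) B : ℝ)) x = 0 :=
  le_antisymm (osc_le le_rfl fun _ _ h => by rw [restrictTo_eq_of_notMem hx h, sub_self, abs_zero])
    (osc_nonneg _ x)

lemma memDelta2_hamDistToSet [TopologicalSpace S] [DiscreteTopology S] :
    MemDelta2 fun ω => (hamDistToSet (restrictTo Λ ω) B : ℝ) :=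
  ⟨(continuous_of_discreteTopology (f := fun σ => (hamDistToSet σ B : ℝ))).comp
      (continuous_pi fun i => continuous_apply i.1),
    summable_osc_sq_of_osc_eq_zero fun _ => osc_hamDistToSet_eq_zero B⟩

end HammingDistance

lemma GCB.hasSubgaussianMGF {S : Type} {d : ℕ} [TopologicalSpace S] [CompactSpace S]
    [SecondCountableTopology S] [MeasurableSpace S] [BorelSpace S] {ν : Measure (Config S d)}
    [IsProbabilityMeasure ν] {D : ℝ} (hGCB : GCB ν D) {F : Config S d → ℝ} (hF : MemDelta2 F)
    {c : ℝ≥0} (hc : 2 * D * oscNorm2sq F ≤ c) :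
    HasSubgaussianMGF (fun ω => F ω - ∫ ω', F ω' ∂ν) c ν where
  integrable_exp_mul t := by
    have := hF.1
    exact Continuous.integrable_of_hasCompactSupport (by fun_prop) (.of_compactSpace _)
  mgf_le t := by
    have hgcb := hGCB _ (hF.const_mul t)
    rw [integral_const_mul, oscNorm2sq_const_mul] at hgcb
    simp only [mgf, mul_sub]
    refine hgcb.trans (exp_le_exp.mpr ?_)
    nlinarith [sq_nonneg t]

lemma GCB.hasSubgaussianMGF_hamDistToSet {S : Type} {d : ℕ} [Fintype S] [DecidableEq S]
    [TopologicalSpace S] [DiscreteTopology S] [MeasurableSpace S] [BorelSpace S]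
    {Λ : Finset (Site d)} {ν : Measure (Config S d)} [IsProbabilityMeasure ν] {D : ℝ}
    (hGCB : GCB ν D) (hD : 0 ≤ D) (B : Set ({x // x ∈ Λ} → S)) {c : ℝ≥0}
    (hc : 2 * D * Λ.card ≤ c) :
    HasSubgaussianMGF (fun ω => (hamDistToSet (restrictTo Λ ω) B : ℝ) -
      ∫ ω', (hamDistToSet (restrictTo Λ ω') B : ℝ) ∂ν) c ν :=
  hGCB.hasSubgaussianMGF (memDelta2_hamDistToSet B) <| hc.trans' <| by
    gcongr
    exact oscNorm2sq_le_card (fun _ => osc_hamDistToSet_eq_zero B) (osc_hamDistToSet_le_one B)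

/-- fattening patterns under the Gaussian concentration bound. -/
theorem fattening_gcb {S : Type} {d : ℕ} [Fintype S] [DecidableEq S] [TopologicalSpace S]
    [DiscreteTopology S] [MeasurableSpace S] [BorelSpace S]
    (Λ : Finset (Site d)) (hΛ : Λ.Nonempty)
    (ν : Measure (Config S d)) [IsProbabilityMeasure ν]
    (D : ℝ) (hD : 0 < D) (hGCB : GCB ν D)
    (B : Set ({x // x ∈ Λ} → S))
    (hB : ν {ω | restrictTo Λ ω ∈ B} = 1 / 2)
    (ε : ℝ) (hε : 2 * Real.sqrt (D * Real.log 2) / Real.sqrt (Λ.card : ℝ) < ε) :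
    1 - ENNReal.ofReal (Real.exp (-((Λ.card : ℝ) / (4 * D)) *
        (ε - 2 * Real.sqrt (D * Real.log 2) / Real.sqrt (Λ.card : ℝ)) ^ 2)) ≤
      ν {ω | (hamDistToSet (restrictTo Λ ω) B : ℝ) ≤ ε * (Λ.card : ℝ)} := by
  set N : ℝ := (Λ.card : ℝ)
  set a := 2 * √(D * log 2) / √N
  set F : Config S d → ℝ := fun ω => (hamDistToSet (restrictTo Λ ω) B : ℝ)
  have hN : 0 < N := by simp [N, hΛ.card_pos]
  let c : ℝ≥0 := ⟨2 * D * N, by positivity⟩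
  have hc : (c : ℝ) = 2 * D * N := rfl
  have hY : HasSubgaussianMGF (fun ω => F ω - ∫ ω', F ω' ∂ν) c ν :=
    hGCB.hasSubgaussianMGF_hamDistToSet hD.le B hc.ge
  have hhalf : 1 / 2 ≤ ν.real {ω | F ω ≤ 0} :=
    calc (1 / 2 : ℝ) = ν.real {ω | restrictTo Λ ω ∈ B} := by simp [measureReal_def, hB]
      _ ≤ ν.real {ω | F ω ≤ 0} :=
        measureReal_mono fun ω (hω : restrictTo Λ ω ∈ B) =>
          show F ω ≤ 0 from (Nat.cast_eq_zero.mpr (hamDistToSet_eq_zero_of_mem hω)).le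
  have hmean : ∫ ω, F ω ∂ν ≤ a * N := by
    have hc₀ : 0 < c := NNReal.coe_pos.mp (hc ▸ by positivity)
    refine (hY.integral_le_sqrt hc₀ (by norm_num) hhalf).trans_eq ?_
    rw [hc, show 2 * (2 * D * N) * log (1 / 2)⁻¹ = 2 ^ 2 * (D * log 2) * N by simp; ring,
      sqrt_mul (by positivity), sqrt_mul (by positivity), sqrt_sq zero_le_two]
    simp only [a]
    field_simp
    rw [sq_sqrt hN.le]
  have htail := hY.measure_ge_le (ε := (ε - a) * N) (by nlinarith)
  refine one_sub_ofReal_le_measure_of_compl_subset (fun ω hω => ?_) (htail.trans_eq ?_)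
  · simp only [Set.mem_compl_iff, Set.mem_ofPred_eq, not_le] at hω ⊢
    linarith
  · rw [hc]
    congr 1
    field_simp
    ring

end Paper
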